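/- Let Θ be a finite set with ⊥ ∉ Θ and let π be a path expression over Γ. There exists a CFM over P and the alphabet Σ × (Θ × (Θ ∪ {⊥})) whose language is exactly the set of extended MSCs (M, ξ), with ξ(e) = (ξ₁(e), ξ₂(e)) ∈ Θ × (Θ ∪ {⊥}), such that for all events e ∈ E, ξ₂(e) = ξ₁(last_π(e)), where ξ₁(⊥) := ⊥. -/

import Mathlib

/-!
For a prefix `σ` of `π`, `last_σ(e)` is determined locally. Appending `→`, `⟨a⟩` or `p▷q` to `σ`
reads off `last_σ` at the process predecessor of `e`, at `e` itself, or at the sender of `e` (or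
gives `⊥`), and `last_{σ→*}(e)` is `last_σ(e)` unless that is `⊥`, in which case it is
`last_{σ→*}` of the predecessor of `e`. The last rule holds because the sources of `σ`-paths move
forward along a process when their target does (for message letters this is FIFO).

So a CFM whose state after `e` is the vector `(ξ₁(last_{π.take i}(e)))ᵢ`, sent along with every
message, computes this vector from the predecessor state and the incoming message and checks
`ξ₂(e)` against its last entry. By well-founded induction on `<`, every run carries exactly these
vectors, so all global states may be accepting.
-/

namespace Gossip

/-- Events extended with bottom and top elements. -/
inductive ExtEv (E : Type) : Type where
  | bot : ExtEv E
  | evt (e : E) : ExtEv E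
  | top : ExtEv E

/-- A message sequence chart (MSC) over processes `P`, alphabet `A`,
with (finite, nonempty) set of events `E`. -/
structure MSC (P A E : Type) : Type where
  fintypeE : Fintype E
  nonemptyE : Nonempty E
  loc : E → P
  lab : E → A
  /-- process successor relation `→` -/
  next : E → E → Prop
  /-- message relation `◁` -/
  msg : E → E → Prop
  next_loc : ∀ {e f : E}, next e f → loc e = loc f
  next_irrefl : ∀ e : E, ¬ next e e
  next_right_unique : ∀ {e f f' : E}, next e f → next e f' → f = f'
  next_left_unique : ∀ {e e' f : E}, next e f → next e' f → e = e'
  next_total : ∀ e f : E, loc e = loc f →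
      Relation.ReflTransGen next e f ∨ Relation.ReflTransGen next f e
  msg_loc : ∀ {e f : E}, msg e f → loc e ≠ loc f
  /-- every event belongs to at most one pair of `◁` -/
  msg_unique : ∀ {e f e' f' : E}, msg e f → msg e' f' →
      (e = e' ∨ e = f' ∨ f = e' ∨ f = f') → e = e' ∧ f = f'
  fifo : ∀ {e f e' f' : E}, msg e f → msg e' f' → loc e = loc e' → loc f = loc f' →
      (Relation.ReflTransGen next e e' ↔ Relation.ReflTransGen next f f')
  /-- `≤ = (→ ∪ ◁)*` is a partial order -/
  causal_antisymm : ∀ {e f : E},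
      Relation.ReflTransGen (fun x y => next x y ∨ msg x y) e f →
      Relation.ReflTransGen (fun x y => next x y ∨ msg x y) f e → e = f

namespace MSC

variable {P A E B : Type}

/-- the causal order `≤ = (→ ∪ ◁)*` -/
def le (M : MSC P A E) : E → E → Prop :=
  Relation.ReflTransGen (fun x y => M.next x y ∨ M.msg x y)

/-- the strict causal order `<` -/
def lt (M : MSC P A E) (e f : E) : Prop := M.le e f ∧ e ≠ f

/-- `→*` -/
def nextStar (M : MSC P A E) : E → E → Prop := Relation.ReflTransGen M.next

/-- the causal order extended to `E ∪ {⊥,⊤}` with `⊥ < e < ⊤` -/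
def extLe (M : MSC P A E) : ExtEv E → ExtEv E → Prop
  | .bot, _ => True
  | _, .top => True
  | .evt e, .evt f => M.le e f
  | _, _ => False

def extLt (M : MSC P A E) (x y : ExtEv E) : Prop := M.extLe x y ∧ x ≠ y

/-- replace the labelling of an MSC (e.g. to pair it with an extra labelling) -/
def relabel (M : MSC P A E) (μ : E → B) : MSC P B E where
  fintypeE := M.fintypeE
  nonemptyE := M.nonemptyE
  loc := M.loc
  lab := μ
  next := M.next
  msg := M.msg
  next_loc := M.next_loc
  next_irrefl := M.next_irrefl
  next_right_unique := M.next_right_unique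
  next_left_unique := M.next_left_unique
  next_total := M.next_total
  msg_loc := M.msg_loc
  msg_unique := M.msg_unique
  fifo := M.fifo
  causal_antisymm := M.causal_antisymm

end MSC

/-- letters of path expressions: `→`, `→*`, `p▷q`, `⟨a⟩` -/
inductive PathLetter (P A : Type) : Type where
  | next : PathLetter P A
  | nextStar : PathLetter P A
  | msg (p q : P) : PathLetter P A
  | lab (a : A) : PathLetter P A

/-- path expressions: finite words over `Γ` -/
abbrev PathExpr (P A : Type) := List (PathLetter P A)

variable {P A E : Type}

def letterSem (M : MSC P A E) : PathLetter P A → E → E → Prop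
  | .next => M.next
  | .nextStar => M.nextStar
  | .msg p q => fun e f => M.loc e = p ∧ M.loc f = q ∧ M.msg e f
  | .lab a => fun e f => e = f ∧ M.lab e = a

/-- `⟦π⟧` -/
def pathSem (M : MSC P A E) : PathExpr P A → E → E → Prop
  | [] => fun e f => e = f
  | l :: π => fun e g => ∃ f, letterSem M l e f ∧ pathSem M π f g

def letterComp : PathLetter P A → P → P → Prop
  | .msg p q => fun x y => x = p ∧ y = q
  | _ => fun x y => x = y

/-- `Comp(π)`; `π ∈ Π_{p,q}` iff `pcomp π p q` -/
def pcomp : PathExpr P A → P → P → Prop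
  | [] => fun x y => x = y
  | l :: π => fun x z => ∃ y, letterComp l x y ∧ pcomp π y z

/-- `IsLast M π e x` holds iff `x = last_π(e)` (with `x = ⊥` iff no `π`-path into `e`). -/
def IsLast (M : MSC P A E) (π : PathExpr P A) (e : E) : ExtEv E → Prop
  | .bot => ∀ f, ¬ pathSem M π f e
  | .evt g => pathSem M π g e ∧ ∀ f, pathSem M π f e → M.le f g
  | .top => False

/-- `IsFirst M π e x` holds iff `x = first_π(e)` (with `x = ⊤` iff no `π`-path out of `e`). -/
def IsFirst (M : MSC P A E) (π : PathExpr P A) (e : E) : ExtEv E → Prop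
  | .top => ∀ f, ¬ pathSem M π e f
  | .evt g => pathSem M π e g ∧ ∀ f, pathSem M π e f → M.le g f
  | .bot => False

/-- `IsFa M π π' e x` holds iff `x = f_{π,π'}(e) = first_{π'}(last_π(e))`, with
`first_{π'}(⊥) := ⊥`. -/
def IsFa (M : MSC P A E) (π π' : PathExpr P A) (e : E) (x : ExtEv E) : Prop :=
  (IsLast M π e ExtEv.bot ∧ x = ExtEv.bot) ∨
    ∃ g, IsLast M π e (ExtEv.evt g) ∧ IsFirst M π' g x

/-- `IsLastProc M p e x` holds iff `x = last_p(e)`, the maximal event of process `p`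
strictly below `e` (`⊥` if none). -/
def IsLastProc (M : MSC P A E) (p : P) (e : E) : ExtEv E → Prop
  | .bot => ∀ f, M.loc f = p → ¬ M.lt f e
  | .evt g => M.loc g = p ∧ M.lt g e ∧ ∀ f, M.loc f = p → M.lt f e → M.le f g
  | .top => False

/-- `π ≼_e π'`, i.e. `last_π(e) ≤ last_{π'}(e)` -/
def ple (M : MSC P A E) (π π' : PathExpr P A) (e : E) : Prop :=
  ∃ x y, IsLast M π e x ∧ IsLast M π' e y ∧ M.extLe x y

def gossipSuffix : P → List P → PathExpr P A
  | _, [] => []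
  | p, q :: w => PathLetter.msg p q :: PathLetter.nextStar :: gossipSuffix q w

/-- `π_w` for `w = p :: rest` -/
def gossipExpr (p : P) (w : List P) : PathExpr P A :=
  match w with
  | [] => [PathLetter.next, PathLetter.nextStar]
  | _ :: _ => PathLetter.nextStar :: gossipSuffix p w

/-- `π ∈ Π^gossip` -/
def IsGossip (π : PathExpr P A) : Prop :=
  ∃ (p : P) (w : List P), (p :: w).Nodup ∧ π = gossipExpr p w

/-- actions of a CFM transition -/
inductive CAct (P A Msg : Type) : Type where
  | internal (a : A) : CAct P A Msg
  | send (a : A) (m : Msg) (q : P) : CAct P A Msg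
  | recv (a : A) (m : Msg) (q : P) : CAct P A Msg

def CAct.labelOf {P A Msg : Type} : CAct P A Msg → A
  | .internal a => a
  | .send a _ _ => a
  | .recv a _ _ => a

/-- a communicating finite-state machine over `P` and `A` -/
structure CFM (P A : Type) : Type 1 where
  Msg : Type
  msgFin : Fintype Msg
  S : Type
  sFin : Fintype S
  ι : P → S
  Δ : P → Set (S × CAct P A Msg × S)
  Acc : Set (P → S)
  wf_send : ∀ p s a m q s', (s, CAct.send a m q, s') ∈ Δ p → q ≠ p
  wf_recv : ∀ p s a m q s', (s, CAct.recv a m q, s') ∈ Δ p → q ≠ p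

namespace CFM

variable {P A E : Type}

/-- `ρ` is a run of the CFM `C` on the MSC `M` -/
def IsRun (C : CFM P A) (M : MSC P A E) (ρ : E → C.S × CAct P A C.Msg × C.S) : Prop :=
  (∀ e, ρ e ∈ C.Δ (M.loc e)) ∧
  (∀ e, ((ρ e).2.1).labelOf = M.lab e) ∧
  (∀ e, (¬ ∃ f, M.next f e) → (ρ e).1 = C.ι (M.loc e)) ∧
  (∀ e f, M.next e f → (ρ e).2.2 = (ρ f).1) ∧
  (∀ e, (¬ ∃ f, M.msg e f) → (¬ ∃ f, M.msg f e) → ∃ a, (ρ e).2.1 = CAct.internal a) ∧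
  (∀ e f, M.msg e f → ∃ m, (ρ e).2.1 = CAct.send (M.lab e) m (M.loc f) ∧
      (ρ f).2.1 = CAct.recv (M.lab f) m (M.loc e))

/-- the run `ρ` is accepting -/
def IsAccepting (C : CFM P A) (M : MSC P A E)
    (ρ : E → C.S × CAct P A C.Msg × C.S) : Prop :=
  ∃ s : P → C.S, s ∈ C.Acc ∧ ∀ p,
    ((∃ e, M.loc e = p) → ∃ e, M.loc e = p ∧ (¬ ∃ f, M.next e f) ∧ s p = (ρ e).2.2) ∧
    ((¬ ∃ e, M.loc e = p) → s p = C.ι p)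

/-- `M ∈ L(C)` -/
def Accepts (C : CFM P A) (M : MSC P A E) : Prop :=
  ∃ ρ, C.IsRun M ρ ∧ C.IsAccepting M ρ

/-- deterministic CFMs -/
def Deterministic (C : CFM P A) : Prop :=
  ∀ p s γ₁ s₁ γ₂ s₂, (s, γ₁, s₁) ∈ C.Δ p → (s, γ₂, s₂) ∈ C.Δ p →
    CAct.labelOf γ₁ = CAct.labelOf γ₂ →
    ((∀ a₁ a₂, γ₁ = CAct.internal a₁ → γ₂ = CAct.internal a₂ → s₁ = s₂) ∧
     (∀ a₁ m₁ a₂ m₂ q, γ₁ = CAct.send a₁ m₁ q → γ₂ = CAct.send a₂ m₂ q →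
        s₁ = s₂ ∧ m₁ = m₂) ∧
     (∀ a₁ a₂ m q, γ₁ = CAct.recv a₁ m q → γ₂ = CAct.recv a₂ m q → s₁ = s₂))

end CFM

/-- acceptance of the extended MSC `(M, ξ)` by a CFM over a product alphabet -/
def AcceptsExt {P A E Ξ : Type} (C : CFM P (A × Ξ)) (M : MSC P A E) (ξ : E → Ξ) : Prop :=
  C.Accepts (M.relabel fun e => (M.lab e, ξ e))

/-- apply `μ` to an extended event, sending both `⊥` and `⊤` to `none` -/
def extToOptMap {E Θ : Type} (μ : E → Θ) : ExtEv E → Option Θ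
  | .evt g => some (μ g)
  | _ => none

/-- apply `μ` to an extended event, preserving `⊥` and `⊤` -/
def extMap {E Θ : Type} (μ : E → Θ) : ExtEv E → ExtEv Θ
  | .bot => ExtEv.bot
  | .evt g => ExtEv.evt (μ g)
  | .top => ExtEv.top

/-- formulas of the temporal logic TL -/
inductive TL (P A : Type) : Type where
  | lab (a : A) : TL P A
  | proc (p : P) : TL P A
  | disj (φ ψ : TL P A) : TL P A
  | neg (φ : TL P A) : TL P A
  | co (φ : TL P A) : TL P A
  | tuntil (φ ψ : TL P A) : TL P A
  | tsince (φ ψ : TL P A) : TL P A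

/-- `M, e ⊨ φ` -/
def TLsat (M : MSC P A E) : TL P A → E → Prop
  | .lab a, e => M.lab e = a
  | .proc p, e => M.loc e = p
  | .disj φ ψ, e => TLsat M φ e ∨ TLsat M ψ e
  | .neg φ, e => ¬ TLsat M φ e
  | .co φ, e => ∃ f, ¬ M.le e f ∧ ¬ M.le f e ∧ TLsat M φ f
  | .tuntil φ ψ, e => ∃ f, M.lt e f ∧ TLsat M ψ f ∧ ∀ g, M.lt e g → M.lt g f → TLsat M φ g
  | .tsince φ ψ, e => ∃ f, M.lt f e ∧ TLsat M ψ f ∧ ∀ g, M.lt f g → M.lt g e → TLsat M φ g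


namespace MSC

variable (M : MSC P A E)

lemma nextStar_le {e f : E} (h : M.nextStar e f) : M.le e f :=
  Relation.ReflTransGen.mono (fun _ _ => Or.inl) _ _ h

lemma nextStar_loc {e f : E} (h : M.nextStar e f) : M.loc e = M.loc f := by
  induction h with
  | refl => rfl
  | tail _ hx ih => exact ih.trans (M.next_loc hx)

lemma lt_of_next {e f : E} (h : M.next e f) : M.lt e f :=
  ⟨.single (Or.inl h), by rintro rfl; exact M.next_irrefl e h⟩

lemma lt_of_msg {e f : E} (h : M.msg e f) : M.lt e f :=
  ⟨.single (Or.inr h), by rintro rfl; exact M.msg_loc h rfl⟩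

lemma lt_wellFounded : WellFounded M.lt := by
  let _ := M.fintypeE
  have : IsTrans E M.lt := ⟨fun _ _ _ h h' =>
    ⟨h.1.trans h'.1, by rintro rfl; exact h'.2 (M.causal_antisymm h'.1 h.1)⟩⟩
  have : Std.Irrefl M.lt := ⟨fun _ h => h.2 rfl⟩
  exact Finite.wellFounded_of_trans_of_irrefl M.lt

lemma msg_left_unique {m m' e : E} (h : M.msg m e) (h' : M.msg m' e) : m = m' :=
  (M.msg_unique h h' (Or.inr (Or.inr (Or.inr rfl)))).1

lemma msg_right_unique {e f f' : E} (h : M.msg e f) (h' : M.msg e f') : f = f' :=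
  (M.msg_unique h h' (Or.inl rfl)).2

lemma not_msg_of_msg {e f m : E} (h : M.msg e f) : ¬ M.msg m e := fun h' => by
  obtain ⟨-, rfl⟩ := M.msg_unique h h' (Or.inr (Or.inl rfl))
  exact M.msg_loc h rfl

lemma exists_nextStar_greatest {s : Set E} (hne : s.Nonempty)
    (hloc : ∀ f ∈ s, ∀ f' ∈ s, M.loc f = M.loc f') : ∃ m ∈ s, ∀ f ∈ s, M.nextStar f m := by
  let _ := M.fintypeE
  have : Nonempty s := hne.to_subtype
  have : IsTrans E M.nextStar := ⟨fun _ _ _ => Relation.ReflTransGen.trans⟩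
  have hdir : Directed M.nextStar (Subtype.val : s → E) := fun a b =>
    (M.next_total a b (hloc a a.2 b b.2)).elim (fun h => ⟨b, h, .refl⟩) (fun h => ⟨a, .refl, h⟩)
  obtain ⟨m, hm⟩ := hdir.finite_le id
  exact ⟨m, m.2, fun f hf => hm ⟨f, hf⟩⟩

lemma exists_last_on_process {p : P} (h : ∃ e, M.loc e = p) :
    ∃ e, M.loc e = p ∧ ¬ ∃ f, M.next e f := by
  obtain ⟨m, hm, hmax⟩ := M.exists_nextStar_greatest (s := {e | M.loc e = p}) h
    (fun f hf f' hf' => hf.trans hf'.symm)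
  refine ⟨m, hm, fun ⟨f, hf⟩ => (M.lt_of_next hf).2 (M.causal_antisymm (M.lt_of_next hf).1 ?_)⟩
  exact M.nextStar_le (hmax f ((M.next_loc hf).symm.trans hm))

end MSC

section PathSemantics

variable (M : MSC P A E)

lemma pathSem_append (σ τ : PathExpr P A) (e g : E) :
    pathSem M (σ ++ τ) e g ↔ ∃ f, pathSem M σ e f ∧ pathSem M τ f g := by
  induction σ generalizing e with
  | nil => simp [pathSem]
  | cons l σ ih =>
    simp only [List.cons_append, pathSem, ih]
    exact ⟨fun ⟨f, hf, m, hm, hm'⟩ => ⟨m, ⟨f, hf, hm⟩, hm'⟩,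
      fun ⟨m, ⟨f, hf, hm⟩, hm'⟩ => ⟨f, hf, m, hm, hm'⟩⟩

lemma pathSem_snoc (σ : PathExpr P A) (l : PathLetter P A) (e g : E) :
    pathSem M (σ ++ [l]) e g ↔ ∃ f, pathSem M σ e f ∧ letterSem M l f g := by
  simp [pathSem_append, pathSem]

lemma loc_eq_of_pathSem {σ : PathExpr P A} {f f' g g' : E} (h : pathSem M σ f g)
    (h' : pathSem M σ f' g') (hg : M.loc g = M.loc g') : M.loc f = M.loc f' := by
  induction σ generalizing f f' with
  | nil =>
    obtain rfl : f = g := h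
    obtain rfl : f' = g' := h'
    exact hg
  | cons l σ ih =>
    obtain ⟨k, hl, hk⟩ := h
    obtain ⟨k', hl', hk'⟩ := h'
    have hloc := ih hk hk'
    cases l with
    | next => exact (M.next_loc hl).trans (hloc.trans (M.next_loc hl').symm)
    | nextStar => exact (M.nextStar_loc hl).trans (hloc.trans (M.nextStar_loc hl').symm)
    | msg p q => exact hl.1.trans hl'.1.symm
    | lab a => obtain ⟨rfl, -⟩ := hl; obtain ⟨rfl, -⟩ := hl'; exact hloc

lemma exists_pathSem_of_nextStar {σ : PathExpr P A} {f f' g g' : E} (hg : M.nextStar g g')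
    (h : pathSem M σ f g) (h' : pathSem M σ f' g') :
    ∃ f'', pathSem M σ f'' g' ∧ M.nextStar f f'' := by
  induction σ using List.reverseRecOn generalizing g g' with
  | nil =>
    obtain rfl : f = g := h
    exact ⟨g', rfl, hg⟩
  | append_singleton σ l ih =>
    rw [pathSem_snoc] at h h'
    obtain ⟨k, hk, hl⟩ := h
    obtain ⟨k', hk', hl'⟩ := h'
    have extend (hkk : M.nextStar k k') : ∃ f'', pathSem M (σ ++ [l]) f'' g' ∧ M.nextStar f f'' :=
      let ⟨f'', hf'', hff⟩ := ih hkk hk hk'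
      ⟨f'', (pathSem_snoc M σ l _ _).2 ⟨k', hf'', hl'⟩, hff⟩
    cases l with
    | next =>
      apply extend
      rcases hg.cases_tail with rfl | ⟨c, hgc, hcg'⟩
      · exact M.next_left_unique hl hl' ▸ .refl
      · exact .head hl (M.next_left_unique hcg' hl' ▸ hgc)
    | nextStar => exact ⟨f, (pathSem_snoc M σ _ _ _).2 ⟨k, hk, hl.trans hg⟩, .refl⟩
    | msg p q =>
      exact extend <| (M.fifo hl.2.2 hl'.2.2 (hl.1.trans hl'.1.symm)
        (hl.2.1.trans hl'.2.1.symm)).2 hg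
    | lab a => obtain ⟨rfl, -⟩ := hl; obtain ⟨rfl, -⟩ := hl'; exact extend hg

end PathSemantics

section Last

variable (M : MSC P A E)

lemma exists_isLast (σ : PathExpr P A) (e : E) : ∃ x, IsLast M σ e x := by
  by_cases h : ∃ f, pathSem M σ f e
  · obtain ⟨m, hm, hmax⟩ := M.exists_nextStar_greatest (s := {f | pathSem M σ f e}) h
      (fun f hf f' hf' => loc_eq_of_pathSem M hf hf' rfl)
    exact ⟨.evt m, hm, fun f hf => M.nextStar_le (hmax f hf)⟩
  · exact ⟨.bot, fun f hf => h ⟨f, hf⟩⟩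

noncomputable def last (σ : PathExpr P A) (e : E) : ExtEv E :=
  (exists_isLast M σ e).choose

lemma isLast_last (σ : PathExpr P A) (e : E) : IsLast M σ e (last M σ e) :=
  (exists_isLast M σ e).choose_spec

variable {M}

lemma IsLast.unique {σ : PathExpr P A} {e : E} {x y : ExtEv E} (hx : IsLast M σ e x)
    (hy : IsLast M σ e y) : x = y := by
  cases x <;> cases y
  all_goals first
    | rfl
    | exact hx.elim
    | exact hy.elim
    | exact (hx _ hy.1).elim
    | exact (hy _ hx.1).elim
    | exact congrArg ExtEv.evt (M.causal_antisymm (hy.2 _ hx.1) (hx.2 _ hy.1))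

lemma last_eq_of_isLast {σ : PathExpr P A} {e : E} {x : ExtEv E} (h : IsLast M σ e x) :
    last M σ e = x :=
  (isLast_last M σ e).unique h

lemma last_ne_top (σ : PathExpr P A) (e : E) : last M σ e ≠ .top := fun h =>
  (h ▸ isLast_last M σ e : IsLast M σ e .top)

lemma last_eq_bot {σ : PathExpr P A} {e : E} (h : ∀ f, ¬ pathSem M σ f e) :
    last M σ e = .bot :=
  last_eq_of_isLast h

lemma last_congr {σ τ : PathExpr P A} {e e' : E}
    (h : ∀ f, pathSem M τ f e' ↔ pathSem M σ f e) : last M τ e' = last M σ e := by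
  apply last_eq_of_isLast
  have hσ := isLast_last M σ e
  generalize last M σ e = x at hσ
  cases x with
  | bot => exact fun f hf => hσ f ((h f).1 hf)
  | evt g => exact ⟨(h g).2 hσ.1, fun f hf => hσ.2 f ((h f).1 hf)⟩
  | top => exact hσ.elim

lemma last_nil (e : E) : last M [] e = .evt e :=
  last_eq_of_isLast ⟨rfl, fun _ hf => (show _ = e from hf) ▸ .refl⟩

lemma last_snoc_next_of_next {σ : PathExpr P A} {d e : E} (hd : M.next d e) :
    last M (σ ++ [.next]) e = last M σ d :=
  last_congr fun f => by
    rw [pathSem_snoc]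
    exact ⟨fun ⟨g, hg, hge⟩ => M.next_left_unique hge hd ▸ hg, fun hf => ⟨d, hf, hd⟩⟩

lemma last_snoc_next_of_min {σ : PathExpr P A} {e : E} (h : ∀ d, ¬ M.next d e) :
    last M (σ ++ [.next]) e = .bot :=
  last_eq_bot fun f hf => by
    obtain ⟨d, -, hd⟩ := (pathSem_snoc M _ _ _ _).1 hf
    exact h d hd

open Classical in
lemma last_snoc_lab (σ : PathExpr P A) (e : E) (a : A) :
    last M (σ ++ [.lab a]) e = if a = M.lab e then last M σ e else .bot := by
  split_ifs with ha
  · exact last_congr fun f => by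
      rw [pathSem_snoc]
      exact ⟨fun ⟨_, hg, rfl, _⟩ => hg, fun hf => ⟨e, hf, rfl, ha.symm⟩⟩
  · exact last_eq_bot fun f hf => by
      obtain ⟨_, -, rfl, ha'⟩ := (pathSem_snoc M _ _ _ _).1 hf
      exact ha ha'.symm

open Classical in
lemma last_snoc_msg_of_msg (σ : PathExpr P A) {m e : E} (p q : P) (hm : M.msg m e) :
    last M (σ ++ [.msg p q]) e = if M.loc m = p ∧ M.loc e = q then last M σ m else .bot := by
  split_ifs with hc
  · exact last_congr fun f => by
      rw [pathSem_snoc]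
      exact ⟨fun ⟨g, hg, _, _, hge⟩ => M.msg_left_unique hge hm ▸ hg,
        fun hf => ⟨m, hf, hc.1, hc.2, hm⟩⟩
  · exact last_eq_bot fun f hf => by
      obtain ⟨m', -, hp, hq, hm'⟩ := (pathSem_snoc M _ _ _ _).1 hf
      exact hc ⟨M.msg_left_unique hm' hm ▸ hp, hq⟩

lemma last_snoc_msg_of_forall_not_msg {σ : PathExpr P A} {e : E} {p q : P}
    (h : ∀ m, ¬ M.msg m e) : last M (σ ++ [.msg p q]) e = .bot :=
  last_eq_bot fun f hf => by
    obtain ⟨m, -, -, -, hm⟩ := (pathSem_snoc M _ _ _ _).1 hf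
    exact h m hm

lemma last_snoc_nextStar_of_evt {σ : PathExpr P A} {e g : E} (h : last M σ e = .evt g) :
    last M (σ ++ [.nextStar]) e = .evt g := by
  obtain ⟨hg, hmax⟩ : IsLast M σ e (.evt g) := h ▸ isLast_last M σ e
  refine last_eq_of_isLast ⟨(pathSem_snoc M _ _ _ _).2 ⟨e, hg, .refl⟩, fun f hf => ?_⟩
  obtain ⟨k, hk, hke⟩ := (pathSem_snoc M _ _ _ _).1 hf
  obtain ⟨f', hf', hff'⟩ := exists_pathSem_of_nextStar M hke hk hg
  exact (M.nextStar_le hff').trans (hmax f' hf')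

lemma last_snoc_nextStar_of_bot_of_next {σ : PathExpr P A} {d e : E} (h : last M σ e = .bot)
    (hd : M.next d e) : last M (σ ++ [.nextStar]) e = last M (σ ++ [.nextStar]) d := by
  have hσ : IsLast M σ e .bot := h ▸ isLast_last M σ e
  refine last_congr fun f => ?_
  rw [pathSem_snoc, pathSem_snoc]
  refine ⟨fun ⟨k, hk, hke⟩ => ?_, fun ⟨k, hk, hkd⟩ => ⟨k, hk, hkd.tail hd⟩⟩
  rcases hke.cases_tail with rfl | ⟨c, hkc, hce⟩
  · exact (hσ f hk).elim
  · exact ⟨k, hk, M.next_left_unique hce hd ▸ hkc⟩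

lemma last_snoc_nextStar_of_bot_of_min {σ : PathExpr P A} {e : E} (h : last M σ e = .bot)
    (hmin : ∀ d, ¬ M.next d e) : last M (σ ++ [.nextStar]) e = .bot := by
  have hσ : IsLast M σ e .bot := h ▸ isLast_last M σ e
  refine last_eq_bot fun f hf => ?_
  obtain ⟨k, hk, hke⟩ := (pathSem_snoc M _ _ _ _).1 hf
  rcases hke.cases_tail with rfl | ⟨c, -, hce⟩
  · exact hσ f hk
  · exact hmin c hce

end Last

section Automaton

variable {Θ : Type}

noncomputable def lastLabel (M : MSC P A E) (ξ₁ : E → Θ) (σ : PathExpr P A) (e : E) :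
    Option Θ :=
  extToOptMap ξ₁ (last M σ e)

def extendByNone {n : ℕ} (v : Fin (n + 1) → Option Θ) (i : ℕ) : Option Θ :=
  if h : i < n + 1 then v ⟨i, h⟩ else none

def recvPayload {B : Type} {n : ℕ} :
    CAct P B (Fin (n + 1) → Option Θ) → Option (P × (ℕ → Option Θ))
  | .recv _ m q => some (q, extendByNone m)
  | _ => none

open Classical in
/-- Entry `i` is meant to be `ξ₁(last_{π.take i}(e))` for an event `e` on `p` with labels `a₀`
and `θ = ξ₁(e)`, where `s` is the vector of the process predecessor of `e` and `inc` the sender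
and vector of the message received at `e`. -/
noncomputable def stepVal (π : PathExpr P A) (p : P) (s : ℕ → Option Θ)
    (inc : Option (P × (ℕ → Option Θ))) (a₀ : A) (θ : Θ) : ℕ → Option Θ
  | 0 => some θ
  | i + 1 =>
    match π[i]? with
    | some .next => s i
    | some .nextStar => (stepVal π p s inc a₀ θ i).or (s (i + 1))
    | some (.lab a) => if a = a₀ then stepVal π p s inc a₀ θ i else none
    | some (.msg p' q) =>
      match inc with
      | some (r, u) => if r = p' ∧ p = q then u i else none
      | none => none
    | none => none

lemma stepVal_eq_lastLabel (M : MSC P A E) (π : PathExpr P A) (ξ₁ : E → Θ) {e : E}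
    {s : ℕ → Option Θ} {inc : Option (P × (ℕ → Option Θ))}
    (hs_next : ∀ d, M.next d e → ∀ j ≤ π.length, s j = lastLabel M ξ₁ (π.take j) d)
    (hs_min : (∀ d, ¬ M.next d e) → ∀ j ≤ π.length, s j = none)
    (hinc_msg : ∀ m, M.msg m e → ∃ u, inc = some (M.loc m, u) ∧
      ∀ j ≤ π.length, u j = lastLabel M ξ₁ (π.take j) m)
    (hinc_none : (∀ m, ¬ M.msg m e) → inc = none) :
    ∀ i ≤ π.length,
      stepVal π (M.loc e) s inc (M.lab e) (ξ₁ e) i = lastLabel M ξ₁ (π.take i) e := by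
  intro i hi
  induction i with
  | zero => simp [stepVal, lastLabel, last_nil, extToOptMap]
  | succ i ih =>
    have hi' : i < π.length := hi
    obtain ⟨l, hl⟩ : ∃ l, π[i]? = some l := ⟨_, List.getElem?_eq_getElem hi'⟩
    have htake : π.take (i + 1) = π.take i ++ [l] := by rw [List.take_add_one, hl]; rfl
    rw [htake]
    cases l <;> simp only [stepVal, hl]
    case next =>
      by_cases hd : ∃ d, M.next d e
      · obtain ⟨d, hd⟩ := hd
        rw [hs_next d hd i hi'.le, lastLabel, lastLabel, last_snoc_next_of_next hd]
      · push Not at hd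
        rw [hs_min hd i hi'.le, lastLabel, last_snoc_next_of_min hd]
        rfl
    case nextStar =>
      rw [ih hi'.le, lastLabel, lastLabel]
      cases hlast : last M (π.take i) e with
      | evt g => rw [last_snoc_nextStar_of_evt hlast]; rfl
      | top => exact (last_ne_top _ _ hlast).elim
      | bot =>
        by_cases hd : ∃ d, M.next d e
        · obtain ⟨d, hd⟩ := hd
          rw [last_snoc_nextStar_of_bot_of_next hlast hd, ← htake]
          exact hs_next d hd (i + 1) hi
        · push Not at hd
          rw [last_snoc_nextStar_of_bot_of_min hlast hd]
          exact hs_min hd (i + 1) hi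
    case lab a =>
      rw [lastLabel, last_snoc_lab, apply_ite (extToOptMap ξ₁), ← lastLabel, ← ih hi'.le]
      rfl
    case msg p q =>
      by_cases hm : ∃ m, M.msg m e
      · obtain ⟨m, hm⟩ := hm
        obtain ⟨u, rfl, hu⟩ := hinc_msg m hm
        rw [lastLabel, last_snoc_msg_of_msg _ p q hm, apply_ite (extToOptMap ξ₁), ← lastLabel,
          ← hu i hi'.le]
        rfl
      · push Not at hm
        rw [hinc_none hm, lastLabel, last_snoc_msg_of_forall_not_msg hm]
        rfl

abbrev PrefixVec (Θ : Type) (π : PathExpr P A) : Type := Fin (π.length + 1) → Option Θ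

def IsStep (π : PathExpr P A) (p : P) (s : PrefixVec Θ π)
    (γ : CAct P (A × (Θ × Option Θ)) (PrefixVec Θ π)) (s' : PrefixVec Θ π) : Prop :=
  (∀ i : Fin (π.length + 1),
    s' i = stepVal π p (extendByNone s) (recvPayload γ) γ.labelOf.1 γ.labelOf.2.1 i) ∧
  γ.labelOf.2.2 = s' (Fin.last _) ∧
  (∀ a m q, γ = .send a m q → q ≠ p ∧ m = s') ∧
  (∀ a m q, γ = .recv a m q → q ≠ p)

noncomputable def lastLabelCFM (Θ : Type) [Fintype Θ] (π : PathExpr P A) :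
    CFM P (A × (Θ × Option Θ)) where
  Msg := PrefixVec Θ π
  msgFin := inferInstance
  S := PrefixVec Θ π
  sFin := inferInstance
  ι _ _ := none
  Δ p := {t | IsStep π p t.1 t.2.1 t.2.2}
  Acc := Set.univ
  wf_send _ _ _ _ _ _ h := (h.2.2.1 _ _ _ rfl).1
  wf_recv _ _ _ _ _ _ h := h.2.2.2 _ _ _ rfl

noncomputable def lastVec (M : MSC P A E) (ξ₁ : E → Θ) (π : PathExpr P A) (e : E) :
    PrefixVec Θ π :=
  fun i => lastLabel M ξ₁ (π.take i) e

lemma extendByNone_lastVec (M : MSC P A E) (ξ₁ : E → Θ) {π : PathExpr P A} (e : E) {j : ℕ}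
    (hj : j ≤ π.length) : extendByNone (lastVec M ξ₁ π e) j = lastLabel M ξ₁ (π.take j) e := by
  simp [extendByNone, lastVec, Nat.lt_succ_of_le hj]

open Classical in
noncomputable def canonicalRun (M : MSC P A E) (ξ : E → Θ × Option Θ) (π : PathExpr P A)
    (e : E) : PrefixVec Θ π × CAct P (A × (Θ × Option Θ)) (PrefixVec Θ π) × PrefixVec Θ π :=
  let v := lastVec M (fun g => (ξ g).1) π
  (if h : ∃ d, M.next d e then v h.choose else fun _ => none,
    if h : ∃ f, M.msg e f then .send (M.lab e, ξ e) (v e) (M.loc h.choose)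
    else if h : ∃ m, M.msg m e then .recv (M.lab e, ξ e) (v h.choose) (M.loc h.choose)
    else .internal (M.lab e, ξ e),
    v e)

section CanonicalRun

variable {M : MSC P A E} {ξ : E → Θ × Option Θ} {π : PathExpr P A}

lemma canonicalRun_fst_of_next {d e : E} (hd : M.next d e) :
    (canonicalRun M ξ π e).1 = lastVec M (fun g => (ξ g).1) π d := by
  have h : ∃ d, M.next d e := ⟨d, hd⟩
  simp only [canonicalRun, dif_pos h, M.next_left_unique h.choose_spec hd]

lemma canonicalRun_fst_of_min {e : E} (h : ¬ ∃ d, M.next d e) :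
    (canonicalRun M ξ π e).1 = fun _ => none := by
  simp only [canonicalRun, dif_neg h]

lemma canonicalRun_act_of_send {e f : E} (hf : M.msg e f) :
    (canonicalRun M ξ π e).2.1 =
      .send (M.lab e, ξ e) (lastVec M (fun g => (ξ g).1) π e) (M.loc f) := by
  have h : ∃ f, M.msg e f := ⟨f, hf⟩
  simp only [canonicalRun, dif_pos h, M.msg_right_unique h.choose_spec hf]

lemma canonicalRun_act_of_recv {m e : E} (hm : M.msg m e) :
    (canonicalRun M ξ π e).2.1 =
      .recv (M.lab e, ξ e) (lastVec M (fun g => (ξ g).1) π m) (M.loc m) := by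
  have h : ∃ m, M.msg m e := ⟨m, hm⟩
  have hs : ¬ ∃ f, M.msg e f := fun ⟨_, hf⟩ => M.not_msg_of_msg hf hm
  simp only [canonicalRun, dif_neg hs, dif_pos h, M.msg_left_unique h.choose_spec hm]

lemma canonicalRun_act_of_internal {e : E} (hs : ¬ ∃ f, M.msg e f) (hr : ¬ ∃ m, M.msg m e) :
    (canonicalRun M ξ π e).2.1 = .internal (M.lab e, ξ e) := by
  simp only [canonicalRun, dif_neg hs, dif_neg hr]

lemma canonicalRun_labelOf (e : E) : (canonicalRun M ξ π e).2.1.labelOf = (M.lab e, ξ e) := by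
  unfold canonicalRun
  split_ifs <;> rfl

lemma canonicalRun_act_cases (e : E) :
    (∃ f, M.msg e f ∧ (canonicalRun M ξ π e).2.1 =
        .send (M.lab e, ξ e) (lastVec M (fun g => (ξ g).1) π e) (M.loc f)) ∨
      (∃ m, M.msg m e ∧ (canonicalRun M ξ π e).2.1 =
        .recv (M.lab e, ξ e) (lastVec M (fun g => (ξ g).1) π m) (M.loc m)) ∨
      (canonicalRun M ξ π e).2.1 = .internal (M.lab e, ξ e) := by
  by_cases hs : ∃ f, M.msg e f
  · obtain ⟨f, hf⟩ := hs
    exact .inl ⟨f, hf, canonicalRun_act_of_send hf⟩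
  by_cases hr : ∃ m, M.msg m e
  · obtain ⟨m, hm⟩ := hr
    exact .inr (.inl ⟨m, hm, canonicalRun_act_of_recv hm⟩)
  exact .inr (.inr (canonicalRun_act_of_internal hs hr))

lemma recvPayload_canonicalRun_of_forall_not_msg {e : E} (h : ∀ m, ¬ M.msg m e) :
    recvPayload (canonicalRun M ξ π e).2.1 = none := by
  rcases canonicalRun_act_cases (ξ := ξ) (π := π) e with ⟨f, -, hact⟩ | ⟨m, hm, -⟩ | hact
  · rw [hact]; rfl
  · exact (h m hm).elim
  · rw [hact]; rfl

lemma isStep_canonicalRun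
    (hξ : ∀ e x, IsLast M π e x → (ξ e).2 = extToOptMap (fun g => (ξ g).1) x) (e : E) :
    IsStep π (M.loc e) (canonicalRun M ξ π e).1 (canonicalRun M ξ π e).2.1
      (canonicalRun M ξ π e).2.2 := by
  refine ⟨fun i => ?_, ?_, fun a m q h => ?_, fun a m q h => ?_⟩
  · rw [canonicalRun_labelOf]
    refine (stepVal_eq_lastLabel (e := e) M π (fun g => (ξ g).1) ?_ ?_ ?_
      recvPayload_canonicalRun_of_forall_not_msg i i.is_le).symm
    · intro d hd j hj
      rw [canonicalRun_fst_of_next hd, extendByNone_lastVec _ _ _ hj]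
    · intro hmin j _
      rw [canonicalRun_fst_of_min fun ⟨d, hd⟩ => hmin d hd]
      simp [extendByNone]
    · intro m hm
      refine ⟨_, by rw [canonicalRun_act_of_recv hm]; rfl, fun j hj => ?_⟩
      exact extendByNone_lastVec _ _ _ hj
  · rw [canonicalRun_labelOf]
    show (ξ e).2 = lastLabel M _ (π.take π.length) e
    rw [List.take_length]
    exact hξ e _ (isLast_last M π e)
  · rcases canonicalRun_act_cases (ξ := ξ) (π := π) e with ⟨f, hf, hact⟩ | ⟨_, -, hact⟩ | hact <;>
      rw [hact] at h <;> cases h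
    exact ⟨(M.msg_loc hf).symm, rfl⟩
  · rcases canonicalRun_act_cases (ξ := ξ) (π := π) e with ⟨_, -, hact⟩ | ⟨m', hm', hact⟩ | hact <;>
      rw [hact] at h <;> cases h
    exact M.msg_loc hm'

end CanonicalRun

end Automaton

lemma CFM.isAccepting_of_acc_eq_univ {B : Type} (C : CFM P B) (M : MSC P B E)
    (ρ : E → C.S × CAct P B C.Msg × C.S) (hAcc : C.Acc = Set.univ) : C.IsAccepting M ρ := by
  classical
  refine ⟨fun p => if h : ∃ e, M.loc e = p then (ρ (M.exists_last_on_process h).choose).2.2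
    else C.ι p, hAcc ▸ trivial, fun p => ⟨fun h => ?_, fun h => dif_neg h⟩⟩
  obtain ⟨hloc, hmax⟩ := (M.exists_last_on_process h).choose_spec
  exact ⟨_, hloc, hmax, dif_pos h⟩

section Runs

variable {Θ : Type} [Fintype Θ] {π : PathExpr P A} {M : MSC P A E} {ξ : E → Θ × Option Θ}

lemma run_state_eq_lastVec {ρ : E → PrefixVec Θ π ×
      CAct P (A × (Θ × Option Θ)) (PrefixVec Θ π) × PrefixVec Θ π}
    (hρ : (lastLabelCFM Θ π).IsRun (M.relabel fun e => (M.lab e, ξ e)) ρ) (e : E) :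
    (ρ e).2.2 = lastVec M (fun g => (ξ g).1) π e := by
  obtain ⟨hΔ, hlab, hinit, hnext, hint, hmsg⟩ := hρ
  induction e using M.lt_wellFounded.induction with
  | _ e ih =>
  obtain ⟨hstep, -⟩ := hΔ e
  funext i
  have hlab_e : (ρ e).2.1.labelOf = (M.lab e, ξ e) := hlab e
  rw [hstep i, hlab_e]
  refine stepVal_eq_lastLabel (e := e) M π (fun g => (ξ g).1) ?_ ?_ ?_ ?_ i i.is_le
  · intro d hd j hj
    rw [← hnext d e hd, ih d (M.lt_of_next hd), extendByNone_lastVec _ _ _ hj]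
  · intro hmin j _
    rw [hinit e fun ⟨d, hd⟩ => hmin d hd]
    simp [extendByNone, lastLabelCFM]
  · intro m hm
    obtain ⟨v, hsend, hrecv⟩ := hmsg m e hm
    refine ⟨extendByNone v, by rw [hrecv]; rfl, fun j hj => ?_⟩
    rw [((hΔ m).2.2.1 _ _ _ hsend).2, ih m (M.lt_of_msg hm), extendByNone_lastVec _ _ _ hj]
  · intro hnone
    by_cases hs : ∃ f, M.msg e f
    · obtain ⟨f, hf⟩ := hs
      obtain ⟨v, hsend, -⟩ := hmsg e f hf
      rw [hsend]; rfl
    · obtain ⟨a, ha⟩ := hint e hs fun ⟨m, hm⟩ => hnone m hm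
      rw [ha]; rfl

lemma label_eq_lastLabel_of_isRun {ρ : E → PrefixVec Θ π ×
      CAct P (A × (Θ × Option Θ)) (PrefixVec Θ π) × PrefixVec Θ π}
    (hρ : (lastLabelCFM Θ π).IsRun (M.relabel fun e => (M.lab e, ξ e)) ρ) (e : E) :
    (ξ e).2 = lastLabel M (fun g => (ξ g).1) π e := by
  obtain ⟨-, hlast, -⟩ := hρ.1 e
  have hlab_e : (ρ e).2.1.labelOf = (M.lab e, ξ e) := hρ.2.1 e
  rw [hlab_e, run_state_eq_lastVec hρ e] at hlast
  rw [hlast, lastVec, Fin.val_last, List.take_length]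

lemma isRun_canonicalRun
    (hξ : ∀ e x, IsLast M π e x → (ξ e).2 = extToOptMap (fun g => (ξ g).1) x) :
    (lastLabelCFM Θ π).IsRun (M.relabel fun e => (M.lab e, ξ e)) (canonicalRun M ξ π) :=
  ⟨isStep_canonicalRun hξ, canonicalRun_labelOf, fun _ h => canonicalRun_fst_of_min h,
    fun _ _ h => (canonicalRun_fst_of_next (M := M) h).symm,
    fun _ hs hr => ⟨_, canonicalRun_act_of_internal hs hr⟩,
    fun _ _ h => ⟨_, canonicalRun_act_of_send h, canonicalRun_act_of_recv h⟩⟩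

end Runs

end Gossip
open Gossip in
theorem stmt12_general {P A : Type} (Θ : Type) [Fintype Θ]
    (π : PathExpr P A) :
    ∃ C : CFM P (A × (Θ × Option Θ)),
      ∀ (E : Type) (M : MSC P A E) (ξ : E → Θ × Option Θ),
        AcceptsExt C M ξ ↔
          ∀ (e : E) (x : ExtEv E), IsLast M π e x →
            (ξ e).2 = extToOptMap (fun g => (ξ g).1) x := by
  refine ⟨lastLabelCFM Θ π, fun E M ξ => ⟨fun ⟨ρ, hρ, _⟩ e x hx => ?_, fun hξ => ?_⟩⟩
  · rw [label_eq_lastLabel_of_isRun hρ e, lastLabel, last_eq_of_isLast hx]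
  · exact ⟨canonicalRun M ξ π, isRun_canonicalRun hξ,
      CFM.isAccepting_of_acc_eq_univ _ _ _ rfl⟩

open Gossip in
/-- Lemma 4: there is a CFM recognizing exactly the extended MSCs
`(M, ξ)` with `ξ(e) = (ξ₁(e), ξ₂(e))` such that `ξ₂(e) = ξ₁(last_π(e))` for all `e`
(with `ξ₁(⊥) = ⊥`). -/
theorem stmt12 {P A : Type} [Fintype P] [Fintype A] (Θ : Type) [Fintype Θ]
    (π : PathExpr P A) :
    ∃ C : CFM P (A × (Θ × Option Θ)),
      ∀ (E : Type) (M : MSC P A E) (ξ : E → Θ × Option Θ),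
        AcceptsExt C M ξ ↔
          ∀ (e : E) (x : ExtEv E), IsLast M π e x →
            (ξ e).2 = extToOptMap (fun g => (ξ g).1) x :=
  stmt12_general Θ π
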